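/- Let F be a continuous strictly increasing CDF on (0,∞) of a log-normally distributed random variable, α∈(0,1), and 0 < λ < λ̂. Define φ_λ(z) = -∫_z^1 F^{-1}(1-y)dy + λ(α-z)/α·1_{{z≤α}}. Then there exist z₁ ∈ (0,α) and z₂ ∈ (α,1) with z₁ = 1 - F(F^{-1}(1-z₂) + λ/α), satisfying φ_λ(z₂) - φ_λ(z₁) - φ'_λ(z₂)(z₂ - z₁) = 0 and φ'_λ(z₁) = φ'_λ(z₂); the concave envelope of φ_λ on [0,1] coincides with φ_λ on [0,z₁]∪[z₂,1] and is affine on [z₁,z₂]. -/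

import Mathlib

/-!
The left derivative `φ'_λ` is antitone on `(0, α]` and on `(α, 1)` but jumps up by `λ/α` at `α`:
`φ_λ` is concave on both sides of a convex kink, and its concave envelope bridges the kink by a
bitangent. For a slope `x`, the points where `φ'_λ = x` are `z₂ = 1 - F x > α` and
`z₁ = 1 - F (x + λ/α)`. The tangency defect `φ_λ z₂ - φ_λ z₁ - x (z₂ - z₁)` is `-η(λ) > 0` at
`x = 0` (`η` is negative near `0` and has no root below `λ̂`) and negative at `x = F⁻¹(1 - α)`,
so it vanishes at some slope. Replacing `φ'_λ` by that constant slope on `(z₁, z₂)` gives an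
antitone function whose primitive is a concave majorant of `φ_λ`; every concave majorant lies
above the chord over `[z₁, z₂]`, so this primitive is the envelope.
-/

open Set MeasureTheory intervalIntegral Filter ProbabilityTheory Topology

theorem IntervalIntegrable.of_mem_Icc {f : ℝ → ℝ} {a b u v : ℝ}
    (hf : IntervalIntegrable f volume a b) (hu : u ∈ Icc a b) (hv : v ∈ Icc a b) :
    IntervalIntegrable f volume u v :=
  hf.mono_set (uIcc_subset_uIcc (Icc_subset_uIcc hu) (Icc_subset_uIcc hv))

theorem ConcaveOn.chord_le {s : Set ℝ} {f : ℝ → ℝ} (hf : ConcaveOn ℝ s f) {x y z : ℝ}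
    (hx : x ∈ s) (hy : y ∈ s) (hxz : x ≤ z) (hzy : z ≤ y) (hxy : x < y) :
    ((y - z) * f x + (z - x) * f y) / (y - x) ≤ f z := by
  have hd : 0 < y - x := sub_pos.2 hxy
  have key := hf.2 hx hy (div_nonneg (sub_nonneg.2 hzy) hd.le)
    (div_nonneg (sub_nonneg.2 hxz) hd.le)
    (by rw [← add_div, div_eq_one_iff_eq hd.ne']; ring)
  have hz : ((y - z) / (y - x)) • x + ((z - x) / (y - x)) • y = z := by
    simp only [smul_eq_mul]; field_simp; ring
  rw [hz, smul_eq_mul, smul_eq_mul] at key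
  calc ((y - z) * f x + (z - x) * f y) / (y - x)
      = (y - z) / (y - x) * f x + (z - x) / (y - x) * f y := by ring
    _ ≤ f z := key

theorem concaveOn_of_sub_eq_integral {φ g : ℝ → ℝ} {a b : ℝ}
    (hg : IntervalIntegrable g volume a b) (hanti : AntitoneOn g (Ioo a b))
    (hφ : ∀ u ∈ Icc a b, ∀ v ∈ Icc a b, φ v - φ u = ∫ y in u..v, g y) :
    ConcaveOn ℝ (Icc a b) φ := by
  refine concaveOn_of_slope_anti_adjacent (convex_Icc a b) fun {x y z} hx hz hxy hyz => ?_
  have hy : y ∈ Ioo a b := ⟨hx.1.trans_lt hxy, hyz.trans_le hz.2⟩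
  have hy' : y ∈ Icc a b := Ioo_subset_Icc_self hy
  have hleft : g y * (y - x) ≤ φ y - φ x := by
    rw [hφ x hx y hy']
    simpa [mul_comm] using integral_mono_on_of_le_Ioo hxy.le intervalIntegrable_const
      (hg.of_mem_Icc hx hy') fun u hu => hanti ⟨hx.1.trans_lt hu.1, hu.2.trans hy.2⟩ hy hu.2.le
  have hright : φ z - φ y ≤ g y * (z - y) := by
    rw [hφ y hy' z hz]
    simpa [mul_comm] using integral_mono_on_of_le_Ioo hyz.le (hg.of_mem_Icc hy' hz)
      intervalIntegrable_const fun u hu => hanti hy ⟨hy.1.trans hu.1, hu.2.trans_le hz.2⟩ hu.1.le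
  calc (φ z - φ y) / (z - y) ≤ g y := (div_le_iff₀ (sub_pos.2 hyz)).2 hright
    _ ≤ (φ y - φ x) / (y - x) := (le_div_iff₀ (sub_pos.2 hxy)).2 hleft

theorem continuousOn_integral_to_one {f : ℝ → ℝ} (hf : IntervalIntegrable f volume 0 1) :
    ContinuousOn (fun t => ∫ y in t..1, f y) (Icc 0 1) := by
  have := continuousOn_primitive_interval_left (μ := volume) (by
    rw [uIcc_of_le zero_le_one]
    exact (intervalIntegrable_iff_integrableOn_Icc_of_le zero_le_one).1 hf)
  rwa [uIcc_of_le zero_le_one] at this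

theorem StrictAntiOn.integral_lt_mul_sub {f : ℝ → ℝ} {a b : ℝ} (hf : StrictAntiOn f (Icc a b))
    (hint : IntervalIntegrable f volume a b) (hab : a < b) :
    ∫ y in a..b, f y < f a * (b - a) := by
  have := intervalIntegral_pos_of_pos_on (intervalIntegrable_const.sub hint)
    (fun y hy => sub_pos.2 (hf ⟨le_rfl, hab.le⟩ (Ioo_subset_Icc_self hy) hy.1)) hab
  rw [integral_sub intervalIntegrable_const hint, intervalIntegral.integral_const,
    smul_eq_mul] at this
  linarith

theorem StrictAntiOn.mul_sub_lt_integral {f : ℝ → ℝ} {a b : ℝ} (hf : StrictAntiOn f (Icc a b))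
    (hint : IntervalIntegrable f volume a b) (hab : a < b) :
    f b * (b - a) < ∫ y in a..b, f y := by
  have := intervalIntegral_pos_of_pos_on (hint.sub intervalIntegrable_const)
    (fun y hy => sub_pos.2 (hf (Ioo_subset_Icc_self hy) ⟨hab.le, le_rfl⟩ hy.2)) hab
  rw [integral_sub hint intervalIntegrable_const, intervalIntegral.integral_const,
    smul_eq_mul] at this
  linarith

def IsConcaveEnvelope (s : Set ℝ) (φ env : ℝ → ℝ) : Prop :=
  ConcaveOn ℝ s env ∧ (∀ z ∈ s, φ z ≤ env z) ∧
    ∀ h : ℝ → ℝ, ConcaveOn ℝ s h → (∀ z ∈ s, φ z ≤ h z) → ∀ z ∈ s, env z ≤ h z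

noncomputable def bridgeSlope (g : ℝ → ℝ) (z₁ z₂ : ℝ) : ℝ → ℝ :=
  (Ioo z₁ z₂).piecewise (fun _ => g z₂) g

noncomputable def bridge (φ : ℝ → ℝ) (s z₁ z₂ : ℝ) : ℝ → ℝ :=
  (Ioo z₁ z₂).piecewise (fun z => φ z₁ + s * (z - z₁)) φ

section Bitangent

variable {φ g : ℝ → ℝ} {a b c z₁ z₂ : ℝ}

theorem bridgeSlope_of_notMem {y : ℝ} (hy : y ∉ Ioo z₁ z₂) : bridgeSlope g z₁ z₂ y = g y :=
  piecewise_eq_of_notMem _ _ _ hy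

theorem bridgeSlope_of_mem_Icc (hslope : g z₁ = g z₂) {y : ℝ} (hy : y ∈ Icc z₁ z₂) :
    bridgeSlope g z₁ z₂ y = g z₂ := by
  by_cases h : y ∈ Ioo z₁ z₂
  · exact piecewise_eq_of_mem _ _ _ h
  · rw [bridgeSlope_of_notMem h]
    have hy' : y ∈ Icc z₁ z₂ \ Ioo z₁ z₂ := ⟨hy, h⟩
    rw [Icc_sdiff_Ioo_same (hy.1.trans hy.2)] at hy'
    obtain rfl | rfl := hy'
    exacts [hslope, rfl]

theorem bridge_of_notMem {s z : ℝ} (hz : z ∉ Ioo z₁ z₂) : bridge φ s z₁ z₂ z = φ z :=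
  piecewise_eq_of_notMem _ _ _ hz

theorem bridge_of_mem_Icc {s z : ℝ} (htangent : φ z₂ - φ z₁ = s * (z₂ - z₁))
    (hz : z ∈ Icc z₁ z₂) : bridge φ s z₁ z₂ z = φ z₁ + s * (z - z₁) := by
  by_cases h : z ∈ Ioo z₁ z₂
  · exact piecewise_eq_of_mem _ _ _ h
  · rw [bridge_of_notMem h]
    have hz' : z ∈ Icc z₁ z₂ \ Ioo z₁ z₂ := ⟨hz, h⟩
    rw [Icc_sdiff_Ioo_same (hz.1.trans hz.2)] at hz'
    obtain rfl | rfl := hz'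
    · ring
    · linarith

theorem antitoneOn_bridgeSlope (hleft : AntitoneOn g (Ioc a c)) (hright : AntitoneOn g (Ioo c b))
    (hz₁ : z₁ ∈ Ioo a c) (hz₂ : z₂ ∈ Ioo c b) (hslope : g z₁ = g z₂) :
    AntitoneOn (bridgeSlope g z₁ z₂) (Ioo a b) := by
  have hge : ∀ y ∈ Ioo a b, y < z₂ → g z₂ ≤ bridgeSlope g z₁ z₂ y := by
    intro y hy hy₂
    by_cases h : y ∈ Ioo z₁ z₂
    · exact (bridgeSlope_of_mem_Icc hslope (Ioo_subset_Icc_self h)).ge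
    have hy₁ : y ≤ z₁ := not_lt.1 fun h₁ => h ⟨h₁, hy₂⟩
    rw [bridgeSlope_of_notMem h, ← hslope]
    exact hleft ⟨hy.1, hy₁.trans hz₁.2.le⟩ ⟨hz₁.1, hz₁.2.le⟩ hy₁
  have hle : ∀ y ∈ Ioo a b, z₁ < y → bridgeSlope g z₁ z₂ y ≤ g z₂ := by
    intro y hy hy₁
    by_cases h : y ∈ Ioo z₁ z₂
    · exact (bridgeSlope_of_mem_Icc hslope (Ioo_subset_Icc_self h)).le
    have hy₂ : z₂ ≤ y := not_lt.1 fun h₂ => h ⟨hy₁, h₂⟩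
    rw [bridgeSlope_of_notMem h]
    exact hright hz₂ ⟨hz₂.1.trans_le hy₂, hy.2⟩ hy₂
  intro u hu w hw huw
  rcases le_or_gt w z₁ with hw₁ | hw₁
  · have hu₁ := huw.trans hw₁
    rw [bridgeSlope_of_notMem fun h => h.1.not_ge hu₁,
      bridgeSlope_of_notMem fun h => h.1.not_ge hw₁]
    exact hleft ⟨hu.1, hu₁.trans hz₁.2.le⟩ ⟨hw.1, hw₁.trans hz₁.2.le⟩ huw
  rcases le_or_gt z₂ u with hu₂ | hu₂
  · have hw₂ := hu₂.trans huw
    rw [bridgeSlope_of_notMem fun h => h.2.not_ge hu₂,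
      bridgeSlope_of_notMem fun h => h.2.not_ge hw₂]
    exact hright ⟨hz₂.1.trans_le hu₂, hu.2⟩ ⟨hz₂.1.trans_le hw₂, hw.2⟩ huw
  exact (hle w hw hw₁).trans (hge u hu hu₂)

theorem bridgeSlope_integral_of_disjoint (hg : IntervalIntegrable g volume a b)
    (hφ : ∀ u ∈ Icc a b, ∀ v ∈ Icc a b, φ v - φ u = ∫ y in u..v, g y) {u v : ℝ}
    (hu : u ∈ Icc a b) (hv : v ∈ Icc a b) (huv : u ≤ v) (hdisj : Disjoint (Icc u v) (Ioo z₁ z₂)) :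
    IntervalIntegrable (bridgeSlope g z₁ z₂) volume u v ∧
      ∫ y in u..v, bridgeSlope g z₁ z₂ y = φ v - φ u := by
  have hEq : EqOn g (bridgeSlope g z₁ z₂) (uIcc u v) := fun y hy =>
    (bridgeSlope_of_notMem (hdisj.notMem_of_mem_left (uIcc_of_le huv ▸ hy))).symm
  refine ⟨(hg.of_mem_Icc hu hv).congr (hEq.mono uIoc_subset_uIcc), ?_⟩
  rw [← integral_congr hEq, hφ u hu v hv]

theorem bridgeSlope_integral_of_subset (hslope : g z₁ = g z₂) {u v : ℝ} (huv : u ≤ v)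
    (hsub : Icc u v ⊆ Icc z₁ z₂) :
    IntervalIntegrable (bridgeSlope g z₁ z₂) volume u v ∧
      ∫ y in u..v, bridgeSlope g z₁ z₂ y = g z₂ * (v - u) := by
  have hEq : EqOn (fun _ => g z₂) (bridgeSlope g z₁ z₂) (uIcc u v) := fun y hy =>
    (bridgeSlope_of_mem_Icc hslope (hsub (uIcc_of_le huv ▸ hy))).symm
  refine ⟨intervalIntegrable_const.congr (hEq.mono uIoc_subset_uIcc), ?_⟩
  rw [← integral_congr hEq, intervalIntegral.integral_const, smul_eq_mul, mul_comm]

theorem bridge_sub_eq_integral (hg : IntervalIntegrable g volume a b)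
    (hφ : ∀ u ∈ Icc a b, ∀ v ∈ Icc a b, φ v - φ u = ∫ y in u..v, g y)
    (ha : a ≤ z₁) (h₁₂ : z₁ < z₂) (hb : z₂ ≤ b) (hslope : g z₁ = g z₂)
    (htangent : φ z₂ - φ z₁ = g z₂ * (z₂ - z₁)) :
    IntervalIntegrable (bridgeSlope g z₁ z₂) volume a b ∧
      ∀ u ∈ Icc a b, ∀ v ∈ Icc a b,
        bridge φ (g z₂) z₁ z₂ v - bridge φ (g z₂) z₁ z₂ u = ∫ y in u..v, bridgeSlope g z₁ z₂ y := by
  have ha' : a ∈ Icc a b := ⟨le_rfl, ha.trans (h₁₂.le.trans hb)⟩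
  have hz₁ : z₁ ∈ Icc a b := ⟨ha, h₁₂.le.trans hb⟩
  have hz₂ : z₂ ∈ Icc a b := ⟨ha.trans h₁₂.le, hb⟩
  have hleft (t : ℝ) (ht : t ∈ Icc a z₁) :=
    bridgeSlope_integral_of_disjoint (z₁ := z₁) (z₂ := z₂) hg hφ ha'
    ⟨ht.1, ht.2.trans hz₁.2⟩ ht.1 (Set.disjoint_left.2 fun y hy h => h.1.not_ge (hy.2.trans ht.2))
  have hmid (t : ℝ) (ht : t ∈ Icc z₁ z₂) :=
    bridgeSlope_integral_of_subset hslope ht.1 (Icc_subset_Icc le_rfl ht.2)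
  have hright (t : ℝ) (ht : t ∈ Icc z₂ b) :=
    bridgeSlope_integral_of_disjoint (z₁ := z₁) (z₂ := z₂) hg hφ hz₂
    ⟨hz₂.1.trans ht.1, ht.2⟩ ht.1 (Set.disjoint_left.2 fun y hy h => h.2.not_ge hy.1)
  have hto₁ := hleft z₁ ⟨ha, le_rfl⟩
  have hto₂ := hmid z₂ ⟨h₁₂.le, le_rfl⟩
  have hint : IntervalIntegrable (bridgeSlope g z₁ z₂) volume a b :=
    (hto₁.1.trans hto₂.1).trans (hright b ⟨hb, le_rfl⟩).1
  have hP : ∀ t ∈ Icc a b,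
      bridge φ (g z₂) z₁ z₂ t - φ a = ∫ y in a..t, bridgeSlope g z₁ z₂ y := by
    intro t ht
    rcases le_or_gt t z₁ with h₁ | h₁
    · rw [bridge_of_notMem fun h => h.1.not_ge h₁, (hleft t ⟨ht.1, h₁⟩).2]
    rcases lt_or_ge t z₂ with h₂ | h₂
    · have hmid_t := hmid t ⟨h₁.le, h₂.le⟩
      rw [bridge_of_mem_Icc htangent ⟨h₁.le, h₂.le⟩,
        ← integral_add_adjacent_intervals hto₁.1 hmid_t.1, hto₁.2, hmid_t.2]
      ring
    · have hright_t := hright t ⟨h₂, ht.2⟩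
      rw [bridge_of_notMem fun h => h.2.not_ge h₂,
        ← integral_add_adjacent_intervals (hto₁.1.trans hto₂.1) hright_t.1,
        ← integral_add_adjacent_intervals hto₁.1 hto₂.1, hto₁.2, hto₂.2, hright_t.2]
      linarith
  refine ⟨hint, fun u hu v hv => ?_⟩
  rw [← integral_interval_sub_left (hint.of_mem_Icc ha' hv) (hint.of_mem_Icc ha' hu),
    ← hP v hv, ← hP u hu]
  ring

theorem le_tangent_of_antitoneOn (hg : IntervalIntegrable g volume a b)
    (hφ : ∀ u ∈ Icc a b, ∀ v ∈ Icc a b, φ v - φ u = ∫ y in u..v, g y)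
    (hleft : AntitoneOn g (Ioc a c)) (hright : AntitoneOn g (Ioo c b))
    (hz₁ : z₁ ∈ Ioo a c) (hz₂ : z₂ ∈ Ioo c b) (hslope : g z₁ = g z₂)
    (htangent : φ z₂ - φ z₁ = g z₂ * (z₂ - z₁)) {z : ℝ} (hz : z ∈ Icc z₁ z₂) :
    φ z ≤ φ z₁ + g z₂ * (z - z₁) := by
  have hz₁' : z₁ ∈ Icc a b := ⟨hz₁.1.le, (hz₁.2.trans hz₂.1).le.trans hz₂.2.le⟩
  have hz₂' : z₂ ∈ Icc a b := ⟨hz₁'.1.trans (hz₁.2.trans hz₂.1).le, hz₂.2.le⟩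
  have hz' : z ∈ Icc a b := ⟨hz₁'.1.trans hz.1, hz.2.trans hz₂'.2⟩
  rcases le_or_gt z c with hzc | hcz
  · have : φ z - φ z₁ ≤ g z₂ * (z - z₁) := by
      rw [hφ z₁ hz₁' z hz', ← hslope]
      simpa [mul_comm] using integral_mono_on_of_le_Ioo hz.1 (hg.of_mem_Icc hz₁' hz')
        intervalIntegrable_const fun y hy =>
          hleft ⟨hz₁.1, hz₁.2.le⟩ ⟨hz₁.1.trans hy.1, hy.2.le.trans hzc⟩ hy.1.le
    linarith
  · have : g z₂ * (z₂ - z) ≤ φ z₂ - φ z := by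
      rw [hφ z hz' z₂ hz₂']
      simpa [mul_comm] using integral_mono_on_of_le_Ioo hz.2 intervalIntegrable_const
        (hg.of_mem_Icc hz' hz₂') fun y hy => hright ⟨hcz.trans hy.1, hy.2.trans hz₂.2⟩ hz₂ hy.2.le
    linarith

theorem IsConcaveEnvelope.eqOn_bridge {env : ℝ → ℝ} (henv : IsConcaveEnvelope (Icc a b) φ env)
    (hg : IntervalIntegrable g volume a b)
    (hφ : ∀ u ∈ Icc a b, ∀ v ∈ Icc a b, φ v - φ u = ∫ y in u..v, g y)
    (hleft : AntitoneOn g (Ioc a c)) (hright : AntitoneOn g (Ioo c b))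
    (hz₁ : z₁ ∈ Ioo a c) (hz₂ : z₂ ∈ Ioo c b) (hslope : g z₁ = g z₂)
    (htangent : φ z₂ - φ z₁ = g z₂ * (z₂ - z₁)) :
    EqOn env (bridge φ (g z₂) z₁ z₂) (Icc a b) := by
  obtain ⟨henv_concave, henv_ge, henv_least⟩ := henv
  have h₁₂ : z₁ < z₂ := hz₁.2.trans hz₂.1
  have hz₁' : z₁ ∈ Icc a b := ⟨hz₁.1.le, h₁₂.le.trans hz₂.2.le⟩
  have hz₂' : z₂ ∈ Icc a b := ⟨hz₁.1.le.trans h₁₂.le, hz₂.2.le⟩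
  obtain ⟨hψ, hrep⟩ := bridge_sub_eq_integral hg hφ hz₁.1.le h₁₂ hz₂.2.le hslope htangent
  have hconcave := concaveOn_of_sub_eq_integral hψ
    (antitoneOn_bridgeSlope hleft hright hz₁ hz₂ hslope) hrep
  have hge : ∀ z ∈ Icc a b, φ z ≤ bridge φ (g z₂) z₁ z₂ z := by
    intro z hz
    by_cases h : z ∈ Icc z₁ z₂
    · rw [bridge_of_mem_Icc htangent h]
      exact le_tangent_of_antitoneOn hg hφ hleft hright hz₁ hz₂ hslope htangent h
    · rw [bridge_of_notMem fun h' => h (Ioo_subset_Icc_self h')]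
  have hle : ∀ z ∈ Icc a b, bridge φ (g z₂) z₁ z₂ z ≤ env z := by
    intro z hz
    by_cases h : z ∈ Icc z₁ z₂
    · rw [bridge_of_mem_Icc htangent h]
      have h₁ := henv_ge z₁ hz₁'
      have h₂ := henv_ge z₂ hz₂'
      have hd : 0 < z₂ - z₁ := sub_pos.2 h₁₂
      calc φ z₁ + g z₂ * (z - z₁) = ((z₂ - z) * φ z₁ + (z - z₁) * φ z₂) / (z₂ - z₁) := by
            rw [eq_div_iff hd.ne']; linear_combination (z₁ - z) * htangent
        _ ≤ ((z₂ - z) * env z₁ + (z - z₁) * env z₂) / (z₂ - z₁) := by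
            gcongr
            · linarith [h.2]
            · linarith [h.1]
        _ ≤ env z := henv_concave.chord_le hz₁' hz₂' h.1 h.2 h₁₂
    · rw [bridge_of_notMem fun h' => h (Ioo_subset_Icc_self h')]
      exact henv_ge z hz
  exact fun z hz => le_antisymm (henv_least _ hconcave hge z hz) (hle z hz)

theorem IsConcaveEnvelope.eq_of_bitangent {env : ℝ → ℝ}
    (henv : IsConcaveEnvelope (Icc a b) φ env) (hg : IntervalIntegrable g volume a b)
    (hφ : ∀ u ∈ Icc a b, ∀ v ∈ Icc a b, φ v - φ u = ∫ y in u..v, g y)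
    (hleft : AntitoneOn g (Ioc a c)) (hright : AntitoneOn g (Ioo c b))
    (hz₁ : z₁ ∈ Ioo a c) (hz₂ : z₂ ∈ Ioo c b) (hslope : g z₁ = g z₂)
    (htangent : φ z₂ - φ z₁ = g z₂ * (z₂ - z₁)) :
    (∀ z ∈ Icc a z₁ ∪ Icc z₂ b, env z = φ z) ∧
      ∀ z ∈ Icc z₁ z₂, env z = φ z₁ + (z - z₁) * (φ z₂ - φ z₁) / (z₂ - z₁) := by
  have heq := henv.eqOn_bridge hg hφ hleft hright hz₁ hz₂ hslope htangent
  have h₁₂ : z₁ < z₂ := hz₁.2.trans hz₂.1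
  refine ⟨?_, fun z hz => ?_⟩
  · rintro z (hz | hz)
    · rw [heq ⟨hz.1, hz.2.trans (h₁₂.le.trans hz₂.2.le)⟩, bridge_of_notMem fun h => h.1.not_ge hz.2]
    · rw [heq ⟨hz₁.1.le.trans (h₁₂.le.trans hz.1), hz.2⟩, bridge_of_notMem fun h => h.2.not_ge hz.1]
  · rw [heq ⟨hz₁.1.le.trans hz.1, hz.2.trans hz₂.2.le⟩, bridge_of_mem_Icc htangent hz, htangent]
    field_simp [(sub_pos.2 h₁₂).ne']

end Bitangent

def IsLognormalCDF (F : ℝ → ℝ) (m : ℝ) (v : NNReal) : Prop :=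
  (∀ x > 0, F x = cdf (gaussianReal m v) (Real.log x)) ∧ ∀ x ≤ 0, F x = 0

section Lognormal

variable {F : ℝ → ℝ} {m : ℝ} {v : NNReal}

theorem cdf_gaussianReal_sub (hv : v ≠ 0) (s t : ℝ) :
    cdf (gaussianReal m v) t - cdf (gaussianReal m v) s = ∫ u in s..t, gaussianPDFReal m v u := by
  have hnonneg (r : ℝ) : 0 ≤ ∫ u in Iic r, gaussianPDFReal m v u :=
    setIntegral_nonneg measurableSet_Iic fun x _ => gaussianPDFReal_nonneg m v x
  rw [cdf_eq_real, cdf_eq_real, measureReal_def, measureReal_def,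
    gaussianReal_apply_eq_integral m hv, gaussianReal_apply_eq_integral m hv,
    ENNReal.toReal_ofReal (hnonneg t), ENNReal.toReal_ofReal (hnonneg s)]
  exact integral_Iic_sub_Iic (integrable_gaussianPDFReal m v).integrableOn
    (integrable_gaussianPDFReal m v).integrableOn

theorem strictMono_cdf_gaussianReal (hv : v ≠ 0) : StrictMono (cdf (gaussianReal m v)) :=
  fun s t hst => sub_pos.1 <| (cdf_gaussianReal_sub hv s t).symm ▸
    intervalIntegral_pos_of_pos_on (integrable_gaussianPDFReal m v).intervalIntegrable
      (fun x _ => gaussianPDFReal_pos m v x hv) hst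

theorem continuous_cdf_gaussianReal (hv : v ≠ 0) : Continuous (cdf (gaussianReal m v)) := by
  have : ⇑(cdf (gaussianReal m v)) =
      fun t => cdf (gaussianReal m v) 0 + ∫ u in (0 : ℝ)..t, gaussianPDFReal m v u := by
    funext t
    rw [← cdf_gaussianReal_sub hv]
    ring
  rw [this]
  exact continuous_const.add ((integrable_gaussianPDFReal m v).continuous_primitive 0)

theorem IsLognormalCDF.strictMonoOn (hF : IsLognormalCDF F m v) (hv : v ≠ 0) :
    StrictMonoOn F (Ici 0) := by
  intro x hx y hy hxy
  have hy0 : 0 < y := (mem_Ici.1 hx).trans_lt hxy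
  rw [hF.1 y hy0]
  rcases (mem_Ici.1 hx).eq_or_lt with rfl | hx0
  · rw [hF.2 0 le_rfl]
    exact (cdf_nonneg _ _).trans_lt (strictMono_cdf_gaussianReal hv (sub_one_lt _))
  · rw [hF.1 x hx0]
    exact strictMono_cdf_gaussianReal hv (Real.log_lt_log hx0 hxy)

theorem IsLognormalCDF.continuousOn (hF : IsLognormalCDF F m v) (hv : v ≠ 0) :
    ContinuousOn F (Ici 0) := by
  intro x hx
  rcases (mem_Ici.1 hx).eq_or_lt with rfl | hx0
  · rw [← continuousWithinAt_Ioi_iff_Ici, ContinuousWithinAt, hF.2 0 le_rfl]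
    refine ((tendsto_cdf_atBot (gaussianReal m v)).comp Real.tendsto_log_nhdsGT_zero).congr' ?_
    filter_upwards [self_mem_nhdsWithin] with y hy using (hF.1 y hy).symm
  · have hEq : (fun y => cdf (gaussianReal m v) (Real.log y)) =ᶠ[𝓝 x] F := by
      filter_upwards [Ioi_mem_nhds hx0] with y hy using (hF.1 y hy).symm
    exact (((continuous_cdf_gaussianReal hv).continuousAt.comp
      (Real.continuousAt_log hx0.ne')).congr hEq).continuousWithinAt

theorem IsLognormalCDF.lt_one (hF : IsLognormalCDF F m v) (hv : v ≠ 0) (x : ℝ) : F x < 1 := by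
  rcases le_or_gt x 0 with hx | hx
  · rw [hF.2 x hx]
    exact one_pos
  · rw [hF.1 x hx]
    exact (strictMono_cdf_gaussianReal hv (lt_add_one _)).trans_le (cdf_le_one _ _)

end Lognormal

section Quantile

variable {F Finv : ℝ → ℝ}

theorem mem_Ioo_of_strictMonoOn (hF_mono : StrictMonoOn F (Ici 0)) (hFneg : ∀ x ≤ 0, F x = 0)
    (hF_lt_one : ∀ x, F x < 1) {x : ℝ} (hx : 0 < x) : F x ∈ Ioo 0 1 :=
  ⟨hFneg 0 le_rfl ▸ hF_mono (mem_Ici.2 le_rfl) (mem_Ici.2 hx.le) hx, hF_lt_one x⟩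

theorem quantile_pos (hFneg : ∀ x ≤ 0, F x = 0) (hFinv : ∀ p ∈ Ioo (0 : ℝ) 1, F (Finv p) = p)
    {p : ℝ} (hp : p ∈ Ioo 0 1) : 0 < Finv p := by
  by_contra h
  have h0 := hFneg _ (not_lt.1 h)
  rw [hFinv p hp] at h0
  exact hp.1.ne' h0

theorem strictAntiOn_quantile_one_sub (hF_mono : StrictMonoOn F (Ici 0)) (hFneg : ∀ x ≤ 0, F x = 0)
    (hFinv : ∀ p ∈ Ioo (0 : ℝ) 1, F (Finv p) = p) :
    StrictAntiOn (fun y => Finv (1 - y)) (Ioo 0 1) := by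
  intro u hu w hw huw
  have hu' : 1 - u ∈ Ioo (0 : ℝ) 1 := ⟨by linarith [hu.2], by linarith [hu.1]⟩
  have hw' : 1 - w ∈ Ioo (0 : ℝ) 1 := ⟨by linarith [hw.2], by linarith [hw.1]⟩
  change Finv (1 - w) < Finv (1 - u)
  rw [← hF_mono.lt_iff_lt (quantile_pos hFneg hFinv hw').le (quantile_pos hFneg hFinv hu').le,
    hFinv _ hw', hFinv _ hu']
  linarith

end Quantile

section Phi

variable {φ φ' Finv : ℝ → ℝ} {α lam : ℝ}

theorem antitone_ite_le (α : ℝ) : Antitone fun y : ℝ => if y ≤ α then (1 : ℝ) else 0 := by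
  intro x y hxy
  by_cases hy : y ≤ α
  · simp [hy, hxy.trans hy]
  · by_cases hx : x ≤ α <;> simp [hx, hy]

theorem integral_ite_le (u v α : ℝ) :
    ∫ y in u..v, (if y ≤ α then (1 : ℝ) else 0) = min v α - min u α := by
  have hint (s t : ℝ) :=
    ((antitone_ite_le α).antitoneOn (uIcc s t)).intervalIntegrable (μ := volume)
  have hfrom (t : ℝ) : ∫ y in α..t, (if y ≤ α then (1 : ℝ) else 0) = min t α - α := by
    rcases le_or_gt t α with ht | ht
    · rw [integral_symm, integral_congr (g := fun _ => (1 : ℝ))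
        fun y hy => if_pos ((uIcc_of_le ht ▸ hy).2), intervalIntegral.integral_const,
        min_eq_left ht]
      simp
    · rw [integral_of_le ht.le, setIntegral_congr_fun measurableSet_Ioc (g := fun _ => (0 : ℝ))
        fun y hy => if_neg (not_le.2 hy.1), min_eq_right ht.le]
      simp
  rw [← integral_interval_sub_left (hint α v) (hint α u), hfrom, hfrom]
  ring

theorem intervalIntegrable_phiDeriv
    (hmean : IntervalIntegrable (fun y => Finv (1 - y)) volume 0 1)
    (hφ' : ∀ z, φ' z = Finv (1 - z) - (lam / α) * (if z ≤ α then 1 else 0)) :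
    IntervalIntegrable φ' volume 0 1 := by
  rw [show φ' = _ from funext hφ']
  exact hmean.sub (((antitone_ite_le α).antitoneOn _).intervalIntegrable.const_mul _)

theorem phi_sub_eq_integral_phiDeriv
    (hmean : IntervalIntegrable (fun y => Finv (1 - y)) volume 0 1)
    (hφ : ∀ z, φ z = -(∫ y in z..1, Finv (1 - y))
        + lam * ((α - z) / α) * (if z ≤ α then 1 else 0))
    (hφ' : ∀ z, φ' z = Finv (1 - z) - (lam / α) * (if z ≤ α then 1 else 0)) :
    ∀ u ∈ Icc (0 : ℝ) 1, ∀ v ∈ Icc (0 : ℝ) 1, φ v - φ u = ∫ y in u..v, φ' y := by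
  intro u hu v hv
  have hkink (z : ℝ) :
      lam * ((α - z) / α) * (if z ≤ α then 1 else 0) = lam / α * (α - min z α) := by
    split_ifs with h
    · rw [min_eq_left h]; ring
    · rw [min_eq_right (not_le.1 h).le]; ring
  have hite := ((antitone_ite_le α).antitoneOn (uIcc u v)).intervalIntegrable (μ := volume)
  rw [integral_congr fun y _ => hφ' y, integral_sub (hmean.of_mem_Icc hu hv) (hite.const_mul _),
    intervalIntegral.integral_const_mul, integral_ite_le, hφ, hφ, hkink, hkink,
    ← integral_add_adjacent_intervals (hmean.of_mem_Icc hu hv)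
      (hmean.of_mem_Icc hv ⟨zero_le_one, le_rfl⟩)]
  ring

theorem antitoneOn_phiDeriv_Ioc (hf : StrictAntiOn (fun y => Finv (1 - y)) (Ioo 0 1))
    (hα : α < 1) (hφ' : ∀ z, φ' z = Finv (1 - z) - (lam / α) * (if z ≤ α then 1 else 0)) :
    AntitoneOn φ' (Ioc 0 α) := by
  intro u hu w hw huw
  rw [hφ', hφ', if_pos hu.2, if_pos hw.2]
  have := hf.antitoneOn ⟨hu.1, hu.2.trans_lt hα⟩ ⟨hw.1, hw.2.trans_lt hα⟩ huw
  linarith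

theorem antitoneOn_phiDeriv_Ioo (hf : StrictAntiOn (fun y => Finv (1 - y)) (Ioo 0 1))
    (hα : 0 ≤ α) (hφ' : ∀ z, φ' z = Finv (1 - z) - (lam / α) * (if z ≤ α then 1 else 0)) :
    AntitoneOn φ' (Ioo α 1) := by
  intro u hu w hw huw
  rw [hφ', hφ', if_neg (not_le.2 hu.1), if_neg (not_le.2 hw.1)]
  have := hf.antitoneOn ⟨hα.trans_lt hu.1, hu.2⟩ ⟨hα.trans_lt hw.1, hw.2⟩ huw
  linarith

end Phi

noncomputable def eta (F Finv : ℝ → ℝ) (α l : ℝ) : ℝ :=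
  -(∫ y in (1 - F (l / α))..1, Finv (1 - y)) + l * (α - 1 + F (l / α)) / α

/-- With `z₁ = 1 - F (x + λ/α)` and `z₂ = 1 - F x`, the points where `φ'_λ` takes the value `x`
on either side of `α`, this is `φ_λ z₂ - φ_λ z₁ - x (z₂ - z₁)` computed as if `z₁ ≤ α < z₂`. -/
noncomputable def tangencyGap (F Finv : ℝ → ℝ) (α lam x : ℝ) : ℝ :=
  (∫ y in (1 - F (x + lam / α))..1, Finv (1 - y)) - (∫ y in (1 - F x)..1, Finv (1 - y))
    - lam * (α - (1 - F (x + lam / α))) / α - x * (F (x + lam / α) - F x)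

section Tangency

variable {F Finv : ℝ → ℝ} {α lam : ℝ}

theorem continuousOn_eta (hα : 0 < α) (hF_mono : StrictMonoOn F (Ici 0))
    (hFneg : ∀ x ≤ 0, F x = 0) (hF_lt_one : ∀ x, F x < 1) (hF_cont : ContinuousOn F (Ici 0))
    (hmean : IntervalIntegrable (fun y => Finv (1 - y)) volume 0 1) :
    ContinuousOn (eta F Finv α) (Ioi 0) := by
  have hFα : ContinuousOn (fun l => F (l / α)) (Ioi 0) :=
    hF_cont.comp (continuousOn_id.div_const α) fun l hl => mem_Ici.2 (div_pos hl hα).le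
  have hz : MapsTo (fun l => 1 - F (l / α)) (Ioi 0) (Icc 0 1) := fun l hl => by
    have := mem_Ioo_of_strictMonoOn hF_mono hFneg hF_lt_one (div_pos hl hα)
    exact ⟨by linarith [this.2], by linarith [this.1]⟩
  exact ((continuousOn_integral_to_one hmean).comp (continuousOn_const.sub hFα) hz).neg.add
    ((continuousOn_id.mul (continuousOn_const.add hFα)).div_const α)

theorem eta_neg {lamhat : ℝ} (hα : α ∈ Ioo 0 1) (hF_mono : StrictMonoOn F (Ici 0))
    (hFneg : ∀ x ≤ 0, F x = 0) (hF_lt_one : ∀ x, F x < 1) (hF_cont : ContinuousOn F (Ici 0))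
    (hFinv : ∀ p ∈ Ioo (0 : ℝ) 1, F (Finv p) = p)
    (hmean : IntervalIntegrable (fun y => Finv (1 - y)) volume 0 1)
    (huniq : ∀ l > 0, eta F Finv α l = 0 → l = lamhat) (hlam : lam ∈ Ioo 0 lamhat) :
    eta F Finv α lam < 0 := by
  obtain ⟨l₀, hl₀, hFl₀⟩ : ∃ l₀ ∈ Ioo 0 lam, F (l₀ / α) < 1 - α := by
    have hlim : Tendsto (fun l => F (l / α)) (𝓝[>] 0) (𝓝 0) := by
      have := ((hF_cont 0 (mem_Ici.2 le_rfl)).comp_of_eq (continuousWithinAt_id.div_const α)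
        (fun l (hl : l ∈ Ici 0) => mem_Ici.2 (div_nonneg hl hα.1.le)) (zero_div α)).mono
          Ioi_subset_Ici_self
      simpa [Function.comp_def, hFneg 0 le_rfl] using this.tendsto
    have hsmall : ∀ᶠ l in 𝓝[>] 0, l ∈ Ioo 0 lam := Ioo_mem_nhdsGT hlam.1
    exact (hsmall.and (hlim.eventually (gt_mem_nhds (sub_pos.2 hα.2)))).exists
  have hη₀ : eta F Finv α l₀ < 0 := by
    have hFl := mem_Ioo_of_strictMonoOn hF_mono hFneg hF_lt_one (div_pos hl₀.1 hα.1)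
    have hint : 0 < ∫ y in (1 - F (l₀ / α))..1, Finv (1 - y) :=
      intervalIntegral_pos_of_pos_on
        (hmean.of_mem_Icc ⟨by linarith [hFl.2], by linarith [hFl.1]⟩ ⟨zero_le_one, le_rfl⟩)
        (fun y hy => quantile_pos hFneg hFinv ⟨by linarith [hy.2], by linarith [hy.1, hFl.2]⟩)
        (by linarith [hFl.1])
    have hlin : l₀ * (α - 1 + F (l₀ / α)) / α < 0 :=
      div_neg_of_neg_of_pos (mul_neg_of_pos_of_neg hl₀.1 (by linarith)) hα.1
    rw [eta]
    linarith
  by_contra hnonneg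
  obtain ⟨l, hl, hηl⟩ := intermediate_value_Icc hl₀.2.le
    ((continuousOn_eta hα.1 hF_mono hFneg hF_lt_one hF_cont hmean).mono
      fun l hl => hl₀.1.trans_le hl.1)
    ⟨hη₀.le, not_lt.1 hnonneg⟩
  linarith [huniq l (hl₀.1.trans_le hl.1) hηl, hl.2, hlam.2]

theorem tangencyGap_zero (hF0 : F 0 = 0) : tangencyGap F Finv α lam 0 = -eta F Finv α lam := by
  simp only [tangencyGap, eta, hF0, zero_add, sub_zero, integral_same, zero_mul]
  ring

theorem continuousOn_tangencyGap (hα : 0 < α) (hlam : 0 < lam) (hF_mono : StrictMonoOn F (Ici 0))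
    (hFneg : ∀ x ≤ 0, F x = 0) (hF_lt_one : ∀ x, F x < 1) (hF_cont : ContinuousOn F (Ici 0))
    (hmean : IntervalIntegrable (fun y => Finv (1 - y)) volume 0 1) :
    ContinuousOn (tangencyGap F Finv α lam) (Ici 0) := by
  have hshift : 0 < lam / α := div_pos hlam hα
  have hF₁ : ContinuousOn (fun x => F (x + lam / α)) (Ici 0) :=
    hF_cont.comp (continuousOn_id.add continuousOn_const) fun x hx =>
      mem_Ici.2 (add_nonneg hx hshift.le)
  have hmaps (c : ℝ) (hc : 0 ≤ c) : MapsTo (fun x => 1 - F (x + c)) (Ici 0) (Icc 0 1) :=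
    fun x hx => by
      rcases (add_nonneg (mem_Ici.1 hx) hc).eq_or_lt with h | h
      · simp [← h, hFneg 0 le_rfl]
      · have := mem_Ioo_of_strictMonoOn hF_mono hFneg hF_lt_one h
        exact ⟨by linarith [this.2], by linarith [this.1]⟩
  have hK := continuousOn_integral_to_one hmean
  have hK₁ := hK.comp (continuousOn_const.sub hF₁) (hmaps _ hshift.le)
  have hK₂ := hK.comp (f := fun x => 1 - F x) (continuousOn_const.sub hF_cont)
    (by simpa using hmaps 0 le_rfl)
  exact ((hK₁.sub hK₂).sub ((continuousOn_const.mul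
    (continuousOn_const.sub (continuousOn_const.sub hF₁))).div_const α)).sub
    (continuousOn_id.mul (hF₁.sub hF_cont))

theorem tangencyGap_quantile_neg (hα : α ∈ Ioo 0 1) (hlam : 0 < lam)
    (hF_mono : StrictMonoOn F (Ici 0)) (hFneg : ∀ x ≤ 0, F x = 0) (hF_lt_one : ∀ x, F x < 1)
    (hFinv : ∀ p ∈ Ioo (0 : ℝ) 1, F (Finv p) = p) (hFinv' : ∀ x > (0 : ℝ), Finv (F x) = x)
    (hmean : IntervalIntegrable (fun y => Finv (1 - y)) volume 0 1) :
    tangencyGap F Finv α lam (Finv (1 - α)) < 0 := by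
  have hα' : 1 - α ∈ Ioo (0 : ℝ) 1 := ⟨by linarith [hα.2], by linarith [hα.1]⟩
  set xα := Finv (1 - α)
  have hxα : 0 < xα := quantile_pos hFneg hFinv hα'
  have hshift : 0 < lam / α := div_pos hlam hα.1
  set w := 1 - F (xα + lam / α)
  have hFw := hF_mono (mem_Ici.2 hxα.le) (mem_Ici.2 (by positivity))
    (lt_add_of_pos_right xα hshift)
  rw [hFinv _ hα'] at hFw
  have hw : w ∈ Ioo 0 α := ⟨by linarith [hF_lt_one (xα + lam / α)], by linarith⟩
  have hwI : w ∈ Icc (0 : ℝ) 1 := ⟨hw.1.le, by linarith [hw.2, hα.2]⟩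
  have hαI : α ∈ Icc (0 : ℝ) 1 := ⟨hα.1.le, hα.2.le⟩
  have hfw : Finv (1 - w) = xα + lam / α := by
    rw [sub_sub_cancel]
    exact hFinv' _ (by positivity)
  have hlt := StrictAntiOn.integral_lt_mul_sub
    ((strictAntiOn_quantile_one_sub hF_mono hFneg hFinv).mono (Icc_subset_Ioo hw.1 hα.2))
    (hmean.of_mem_Icc hwI hαI) hw.2
  rw [hfw] at hlt
  have hsplit := integral_add_adjacent_intervals (hmean.of_mem_Icc hwI hαI)
    (hmean.of_mem_Icc hαI ⟨zero_le_one, le_rfl⟩)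
  have hgap : tangencyGap F Finv α lam xα =
      (∫ y in w..α, Finv (1 - y)) - (xα + lam / α) * (α - w) := by
    rw [tangencyGap, hFinv _ hα', sub_sub_cancel, ← hsplit]
    simp only [w]
    field_simp
    ring
  linarith

theorem exists_tangencyGap_eq_zero (hα : α ∈ Ioo 0 1) (hlam : 0 < lam)
    (hF_mono : StrictMonoOn F (Ici 0)) (hFneg : ∀ x ≤ 0, F x = 0) (hF_lt_one : ∀ x, F x < 1)
    (hF_cont : ContinuousOn F (Ici 0)) (hFinv : ∀ p ∈ Ioo (0 : ℝ) 1, F (Finv p) = p)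
    (hFinv' : ∀ x > (0 : ℝ), Finv (F x) = x)
    (hmean : IntervalIntegrable (fun y => Finv (1 - y)) volume 0 1)
    (hη : eta F Finv α lam < 0) :
    ∃ x ∈ Ioo 0 (Finv (1 - α)), tangencyGap F Finv α lam x = 0 := by
  have hxα : 0 < Finv (1 - α) :=
    quantile_pos hFneg hFinv ⟨by linarith [hα.2], by linarith [hα.1]⟩
  have hgap₀ : 0 < tangencyGap F Finv α lam 0 := by
    rw [tangencyGap_zero (hFneg 0 le_rfl)]
    linarith
  have hgapα :=
    tangencyGap_quantile_neg hα hlam hF_mono hFneg hF_lt_one hFinv hFinv' hmean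
  obtain ⟨x, hx, hx0⟩ := intermediate_value_Icc' hxα.le
    ((continuousOn_tangencyGap hα.1 hlam hF_mono hFneg hF_lt_one hF_cont hmean).mono
      Icc_subset_Ici_self) ⟨hgapα.le, hgap₀.le⟩
  refine ⟨x, ⟨hx.1.lt_of_ne ?_, hx.2.lt_of_ne ?_⟩, hx0⟩
  · rintro rfl
    linarith
  · rintro rfl
    linarith

theorem exists_bitangent (hα : α ∈ Ioo 0 1) (hlam : 0 < lam)
    (hF_mono : StrictMonoOn F (Ici 0)) (hFneg : ∀ x ≤ 0, F x = 0) (hF_lt_one : ∀ x, F x < 1)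
    (hF_cont : ContinuousOn F (Ici 0)) (hFinv : ∀ p ∈ Ioo (0 : ℝ) 1, F (Finv p) = p)
    (hFinv' : ∀ x > (0 : ℝ), Finv (F x) = x)
    (hmean : IntervalIntegrable (fun y => Finv (1 - y)) volume 0 1)
    (hη : eta F Finv α lam < 0) :
    ∃ z₁ ∈ Ioo 0 α, ∃ z₂ ∈ Ioo α 1,
      z₁ = 1 - F (Finv (1 - z₂) + lam / α) ∧ Finv (1 - z₁) = Finv (1 - z₂) + lam / α ∧
      (∫ y in z₁..1, Finv (1 - y)) - (∫ y in z₂..1, Finv (1 - y)) - lam * (α - z₁) / α =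
        Finv (1 - z₂) * (z₂ - z₁) := by
  obtain ⟨x, hx, hgap⟩ :=
    exists_tangencyGap_eq_zero hα hlam hF_mono hFneg hF_lt_one hF_cont hFinv hFinv' hmean hη
  have hα' : 1 - α ∈ Ioo (0 : ℝ) 1 := ⟨by linarith [hα.2], by linarith [hα.1]⟩
  have hshift : 0 < lam / α := div_pos hlam hα.1
  have hFx := mem_Ioo_of_strictMonoOn hF_mono hFneg hF_lt_one hx.1
  have hFxα : F x < 1 - α := hFinv _ hα' ▸ hF_mono (mem_Ici.2 hx.1.le)
    (mem_Ici.2 (quantile_pos hFneg hFinv hα').le) hx.2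
  have hFx₁ : F x < F (x + lam / α) :=
    hF_mono (mem_Ici.2 hx.1.le) (mem_Ici.2 (by linarith [hx.1])) (lt_add_of_pos_right x hshift)
  rw [tangencyGap] at hgap
  set z₁ := 1 - F (x + lam / α) with hz₁
  set z₂ := 1 - F x with hz₂
  have hdiff : F (x + lam / α) - F x = z₂ - z₁ := by ring
  rw [hdiff] at hgap
  have hf₂ : Finv (1 - z₂) = x := by rw [sub_sub_cancel]; exact hFinv' x hx.1
  have hf₁ : Finv (1 - z₁) = x + lam / α := by
    rw [sub_sub_cancel]; exact hFinv' _ (by linarith [hx.1])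
  have hz₁₂ : z₁ < z₂ := by linarith
  have hz₂1 : z₂ < 1 := by linarith [hFx.1]
  refine ⟨z₁, ⟨by linarith [hF_lt_one (x + lam / α)], ?_⟩, z₂, ⟨by linarith, hz₂1⟩,
    by rw [hf₂], by rw [hf₁, hf₂], by rw [hf₂]; linarith⟩
  by_contra! hαz₁
  have hz₁I : z₁ ∈ Icc (0 : ℝ) 1 := ⟨by linarith [hα.1], by linarith⟩
  have hz₂I : z₂ ∈ Icc (0 : ℝ) 1 := ⟨by linarith [hα.1], hz₂1.le⟩
  have hgt := StrictAntiOn.mul_sub_lt_integral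
    ((strictAntiOn_quantile_one_sub hF_mono hFneg hFinv).mono
      (Icc_subset_Ioo (hα.1.trans_le hαz₁) hz₂1)) (hmean.of_mem_Icc hz₁I hz₂I) hz₁₂
  rw [hf₂] at hgt
  have hsplit := integral_add_adjacent_intervals (hmean.of_mem_Icc hz₁I hz₂I)
    (hmean.of_mem_Icc hz₂I ⟨zero_le_one, le_rfl⟩)
  have hkink : lam * (α - z₁) / α ≤ 0 :=
    div_nonpos_of_nonpos_of_nonneg (mul_nonpos_of_nonneg_of_nonpos hlam.le (by linarith)) hα.1.le
  linarith

end Tangency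

/-- for log-normal F and 0 < λ < λ̂ there exist z₁ ∈ (0,α), z₂ ∈ (α,1) with
z₁ = 1-F(F⁻¹(1-z₂)+λ/α), the tangency equation, φ'_λ(z₁) = φ'_λ(z₂); the concave
envelope of φ_λ coincides with φ_λ on [0,z₁]∪[z₂,1] and is affine on [z₁,z₂]. -/
theorem stmt_11 (F Finv : ℝ → ℝ) (α lam : ℝ) (hα : α ∈ Set.Ioo (0:ℝ) 1)
    (m σ : ℝ) (hσ : 0 < σ)
    (hlognormal : ∀ x > (0:ℝ), F x =
      ((ProbabilityTheory.gaussianReal m (⟨σ^2, by positivity⟩ : NNReal))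
        (Set.Iic (Real.log x))).toReal)
    (hFneg : ∀ x ≤ (0:ℝ), F x = 0)
    (hFinv : ∀ p ∈ Set.Ioo (0:ℝ) 1, F (Finv p) = p)
    (hFinv' : ∀ x > (0:ℝ), Finv (F x) = x)
    (hmean : IntervalIntegrable (fun y => Finv (1 - y)) MeasureTheory.volume 0 1)
    (φ φ' : ℝ → ℝ)
    (hφ : ∀ z, φ z = -(∫ y in z..1, Finv (1 - y))
        + lam * ((α - z) / α) * (if z ≤ α then 1 else 0))
    (hφ' : ∀ z, φ' z = Finv (1 - z) - (lam / α) * (if z ≤ α then 1 else 0))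
    (lamhat : ℝ)
    (huniq : ∀ l > (0:ℝ),
      -(∫ y in (1 - F (l / α))..1, Finv (1 - y)) + l * (α - 1 + F (l / α)) / α = 0 →
      l = lamhat)
    (hlam : lam ∈ Set.Ioo (0:ℝ) lamhat) :
    ∃ z₁ ∈ Set.Ioo (0:ℝ) α, ∃ z₂ ∈ Set.Ioo α 1,
      z₁ = 1 - F (Finv (1 - z₂) + lam / α) ∧
      φ z₂ - φ z₁ - φ' z₂ * (z₂ - z₁) = 0 ∧
      φ' z₁ = φ' z₂ ∧
      ∀ env : ℝ → ℝ,
        (ConcaveOn ℝ (Set.Icc (0:ℝ) 1) env ∧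
         (∀ z ∈ Set.Icc (0:ℝ) 1, φ z ≤ env z) ∧
         (∀ h : ℝ → ℝ, ConcaveOn ℝ (Set.Icc (0:ℝ) 1) h →
            (∀ z ∈ Set.Icc (0:ℝ) 1, φ z ≤ h z) →
            ∀ z ∈ Set.Icc (0:ℝ) 1, env z ≤ h z)) →
        ((∀ z ∈ Set.Icc (0:ℝ) z₁ ∪ Set.Icc z₂ 1, env z = φ z) ∧
         (∀ z ∈ Set.Icc z₁ z₂, env z = φ z₁
            + (z - z₁) * (φ z₂ - φ z₁) / (z₂ - z₁))) := by
  set v : NNReal := ⟨σ ^ 2, by positivity⟩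
  have hv : v ≠ 0 := fun h => (pow_pos hσ 2).ne' (congrArg NNReal.toReal h)
  have hlogn : IsLognormalCDF F m v :=
    ⟨fun x hx => by rw [hlognormal x hx, cdf_eq_real, measureReal_def], hFneg⟩
  have hF_mono := hlogn.strictMonoOn hv
  have hF_lt_one := hlogn.lt_one hv
  have hF_cont := hlogn.continuousOn hv
  have hη := eta_neg hα hF_mono hFneg hF_lt_one hF_cont hFinv hmean huniq hlam
  obtain ⟨z₁, hz₁, z₂, hz₂, hz₁_eq, hf₁₂, htangent⟩ :=
    exists_bitangent hα hlam.1 hF_mono hFneg hF_lt_one hF_cont hFinv hFinv' hmean hη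
  have hf := strictAntiOn_quantile_one_sub hF_mono hFneg hFinv
  have hφ'₂ : φ' z₂ = Finv (1 - z₂) := by rw [hφ', if_neg (not_le.2 hz₂.1)]; ring
  have hslope : φ' z₁ = φ' z₂ := by rw [hφ', if_pos hz₁.2.le, hf₁₂, hφ'₂]; ring
  have hφ₁₂ : φ z₂ - φ z₁ = φ' z₂ * (z₂ - z₁) := by
    rw [hφ, hφ, if_neg (not_le.2 hz₂.1), if_pos hz₁.2.le, hφ'₂, ← htangent]
    ring
  refine ⟨z₁, hz₁, z₂, hz₂, hz₁_eq, by linarith, hslope, fun env henv => ?_⟩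
  exact IsConcaveEnvelope.eq_of_bitangent henv (intervalIntegrable_phiDeriv hmean hφ')
    (phi_sub_eq_integral_phiDeriv hmean hφ hφ') (antitoneOn_phiDeriv_Ioc hf hα.2 hφ')
    (antitoneOn_phiDeriv_Ioo hf hα.1.le hφ') hz₁ hz₂ hslope hφ₁₂
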